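/- Theorem 2 (closed-form gradient of the smoothed sum rate with respect to the IRS phase shifts): Fix beamformers f_1,…,f_G ∈ ℂ^N and channels h_{k,g} ∈ ℂ^{1×N}, ĥ_{k,g} ∈ ℂ^{1×M}, H_ts ∈ ℂ^{M×N}; for θ ∈ ℂ^M set z_{k,g}(θ) = h_{k,g} + ĥ_{k,g}·diag(θ)·H_ts, R_{k,g}(θ) = ln(1 + |z_{k,g}(θ) f_g|²/(1 + Σ_{ℓ≠g} |z_{k,g}(θ) f_ℓ|²)), and R̃_sum(θ) = −(1/τ)·Σ_{g=1}^{G} ln(Σ_{k=1}^{K_g} exp(−τ·R_{k,g}(θ))) with τ > 0. Then R̃_sum is real-differentiable at every θ, with conjugate Wirtinger gradient Σ_{g=1}^{G} [ Σ_{k=1}^{K_g} exp(−τ R_{k,g}(θ)) · ( (Σ_{j=1}^{G} v_{k,g,j}) / (1 + Σ_{j=1}^{G} |z_{k,g}(θ) f_j|²) − (Σ_{ℓ≠g} v_{k,g,ℓ}) / (1 + Σ_{ℓ≠g} |z_{k,g}(θ) f_ℓ|²) ) ] / [ Σ_{k=1}^{K_g} exp(−τ R_{k,g}(θ)) ], where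 v_{k,g,j} ∈ ℂ^M has entries (v_{k,g,j})_m = conj((ĥ_{k,g})_m)·(z_{k,g}(θ) f_j)·conj((H_ts f_j)_m), i.e., v_{k,g,j} = vecd{ ĥ_{k,g}ᴴ z_{k,g}(θ) f_j f_jᴴ H_tsᴴ }. -/

import Mathlib

open Finset

noncomputable section

/-- Row-vector/column-vector product `z·v = ∑ⱼ zⱼ vⱼ`. -/
def cdot {N : ℕ} (z v : Fin N → ℂ) : ℂ := ∑ j, z j * v j

/-- `g` is the conjugate Wirtinger gradient of `F : ℂⁿ → ℝ` at `x`: `F` is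
real-(Fréchet-)differentiable at `x` and the derivative in any direction `u`
equals `2·Re(∑ₘ conj(gₘ)·uₘ)`. -/
def HasWirtingerGradAt {n : ℕ} (F : (Fin n → ℂ) → ℝ) (g : Fin n → ℂ)
    (x : Fin n → ℂ) : Prop :=
  ∃ D : (Fin n → ℂ) →L[ℝ] ℝ, HasFDerivAt F D x ∧
    ∀ h : Fin n → ℂ, D h = 2 * (∑ j, (starRingEnd ℂ) (g j) * h j).re


namespace HasWirtingerGradAt

variable {n : ℕ} {x : Fin n → ℂ}

lemma congr_all {F F' : (Fin n → ℂ) → ℝ} {g g' : Fin n → ℂ}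
    (hg : HasWirtingerGradAt F g x) (hF : ∀ y, F y = F' y) (hgg : ∀ m, g m = g' m) :
    HasWirtingerGradAt F' g' x := by
  have h1 : F = F' := funext hF
  have h2 : g = g' := funext hgg
  rw [← h1, ← h2]; exact hg

lemma const (c : ℝ) : HasWirtingerGradAt (fun _ => c) (fun _ => 0) x := by
  refine ⟨0, hasFDerivAt_const c x, fun h => ?_⟩
  simp

lemma hsum {ι : Type*} (s : Finset ι) {F : ι → (Fin n → ℂ) → ℝ} {g : ι → Fin n → ℂ}
    (hF : ∀ i ∈ s, HasWirtingerGradAt (F i) (g i) x) :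
    HasWirtingerGradAt (fun y => ∑ i ∈ s, F i y) (fun m => ∑ i ∈ s, g i m) x := by
  simp only [HasWirtingerGradAt] at hF
  choose D hD hDval using hF
  refine ⟨∑ i ∈ s.attach, D i i.2, ?_, fun h => ?_⟩
  · have h1 : (fun y => ∑ i ∈ s, F i y) = fun y => ∑ i ∈ s.attach, F i.1 y := by
      funext y; exact (Finset.sum_attach s fun i => F i y).symm
    rw [h1]; exact HasFDerivAt.fun_sum (fun i _ => hD i.1 i.2)
  · simp only [ContinuousLinearMap.coe_sum', Finset.sum_apply]
    rw [Finset.sum_congr rfl (fun i _ => hDval i.1 i.2 h)]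
    rw [← Finset.mul_sum]
    congr 1
    rw [← Complex.re_sum]
    congr 1
    rw [Finset.sum_comm]
    refine Finset.sum_congr rfl (fun j _ => ?_)
    rw [← Finset.sum_mul, ← map_sum, Finset.sum_attach s fun i => g i j]

lemma const_mul {F : (Fin n → ℂ) → ℝ} {g : Fin n → ℂ} (c : ℝ)
    (hF : HasWirtingerGradAt F g x) :
    HasWirtingerGradAt (fun y => c * F y) (fun m => (c : ℂ) * g m) x := by
  obtain ⟨D, hD, hDval⟩ := hF
  refine ⟨c • D, hD.const_mul c, fun h => ?_⟩
  simp only [ContinuousLinearMap.coe_smul', Pi.smul_apply, smul_eq_mul, hDval]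
  have : ∑ j, (starRingEnd ℂ) ((c : ℂ) * g j) * h j
      = (c : ℂ) * ∑ j, (starRingEnd ℂ) (g j) * h j := by
    rw [Finset.mul_sum]; exact Finset.sum_congr rfl fun j _ => by
      simp [map_mul, Complex.conj_ofReal]; ring
  rw [this, Complex.re_ofReal_mul]; ring

lemma add_const {F : (Fin n → ℂ) → ℝ} {g : Fin n → ℂ} (c : ℝ)
    (hF : HasWirtingerGradAt F g x) :
    HasWirtingerGradAt (fun y => c + F y) g x := by
  obtain ⟨D, hD, hDval⟩ := hF
  exact ⟨D, by simpa using hD.const_add c, hDval⟩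

lemma sub {F F' : (Fin n → ℂ) → ℝ} {g g' : Fin n → ℂ}
    (hF : HasWirtingerGradAt F g x) (hF' : HasWirtingerGradAt F' g' x) :
    HasWirtingerGradAt (fun y => F y - F' y) (fun m => g m - g' m) x := by
  obtain ⟨D, hD, hDval⟩ := hF
  obtain ⟨D', hD', hDval'⟩ := hF'
  refine ⟨D - D', hD.sub hD', fun h => ?_⟩
  simp only [ContinuousLinearMap.coe_sub', Pi.sub_apply, hDval, hDval']
  have : ∑ j, (starRingEnd ℂ) (g j - g' j) * h j
      = (∑ j, (starRingEnd ℂ) (g j) * h j) - ∑ j, (starRingEnd ℂ) (g' j) * h j := by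
    rw [← Finset.sum_sub_distrib]
    exact Finset.sum_congr rfl fun j _ => by rw [map_sub]; ring
  rw [this, Complex.sub_re]; ring

lemma comp_real {F : (Fin n → ℂ) → ℝ} {g : Fin n → ℂ} {φ : ℝ → ℝ} {d : ℝ}
    (hφ : HasDerivAt φ d (F x)) (hF : HasWirtingerGradAt F g x) :
    HasWirtingerGradAt (fun y => φ (F y)) (fun m => (d : ℂ) * g m) x := by
  obtain ⟨D, hD, hDval⟩ := hF
  refine ⟨d • D, hφ.comp_hasFDerivAt x hD, fun h => ?_⟩
  simp only [ContinuousLinearMap.coe_smul', Pi.smul_apply, smul_eq_mul, hDval]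
  have : ∑ j, (starRingEnd ℂ) ((d : ℂ) * g j) * h j
      = (d : ℂ) * ∑ j, (starRingEnd ℂ) (g j) * h j := by
    rw [Finset.mul_sum]; exact Finset.sum_congr rfl fun j _ => by
      simp [map_mul, Complex.conj_ofReal]; ring
  rw [this, Complex.re_ofReal_mul]; ring

end HasWirtingerGradAt

lemma wgrad_normSq_affine {n : ℕ} (c : ℂ) (a : Fin n → ℂ) (x : Fin n → ℂ) :
    HasWirtingerGradAt (fun y => Complex.normSq (c + ∑ m, a m * y m))
      (fun m => (starRingEnd ℂ) (a m) * (c + ∑ m', a m' * x m')) x := by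
  set w : ℂ := c + ∑ m', a m' * x m' with hw
  set L : (Fin n → ℂ) →L[ℝ] ℂ :=
    ∑ m, a m • ((ContinuousLinearMap.proj m : (Fin n → ℂ) →L[ℝ] ℂ)) with hL
  have hLapp : ∀ u : Fin n → ℂ, L u = ∑ m, a m * u m := by
    intro u
    simp [hL, ContinuousLinearMap.sum_apply, ContinuousLinearMap.smul_apply]
  have hA : HasFDerivAt (fun y : Fin n → ℂ => c + ∑ m, a m * y m) L x := by
    have h1 : ∀ m : Fin n, HasFDerivAt (fun y : Fin n → ℂ => a m * y m)
        (a m • (ContinuousLinearMap.proj m : (Fin n → ℂ) →L[ℝ] ℂ)) x :=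
      fun m => ((ContinuousLinearMap.proj m : (Fin n → ℂ) →L[ℝ] ℂ).hasFDerivAt).const_mul (a m)
    have h2 := (hasFDerivAt_const c x).add
      (HasFDerivAt.fun_sum (fun m (_ : m ∈ Finset.univ) => h1 m))
    rw [hL]
    rw [zero_add] at h2; exact h2
  have hN : HasFDerivAt (fun y : Fin n → ℂ => ‖c + ∑ m, a m * y m‖ ^ 2)
      (2 • (innerSL ℝ w).comp L) x := by
    have := hA.norm_sq
    rwa [← hw] at this
  have hfun : (fun y : Fin n → ℂ => Complex.normSq (c + ∑ m, a m * y m))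
      = fun y : Fin n → ℂ => ‖c + ∑ m, a m * y m‖ ^ 2 := by
    funext y
    simp [Complex.normSq_eq_norm_sq]
  refine ⟨2 • (innerSL ℝ w).comp L, by rw [hfun]; exact hN, fun h => ?_⟩
  have : (2 • (innerSL ℝ w).comp L) h = 2 * ((starRingEnd ℂ) w * L h).re := by
    simp [ContinuousLinearMap.smul_apply, Complex.inner]; ring
  rw [this, hLapp]
  congr 1
  have : (starRingEnd ℂ) w * ∑ m, a m * h m
      = ∑ j, (starRingEnd ℂ) ((starRingEnd ℂ) (a j) * w) * h j := by
    rw [Finset.mul_sum]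
    exact Finset.sum_congr rfl fun j _ => by
      simp [map_mul, Complex.conj_conj]; ring
  rw [this]

lemma alg_aux (τc E e WS WB S B : ℂ) (hτ : τc ≠ 0) (hS : S ≠ 0) (hB : B ≠ 0) (hE : E ≠ 0) :
    -(1 * τc⁻¹) * (E⁻¹ * (e * (-τc * (S⁻¹ * WS - B⁻¹ * WB)))) = e * (WS / S - WB / B) / E := by
  field_simp

variable {N M G : ℕ} {Kc : Fin G → ℕ}

/-- Effective channel `z_{k,g}(θ) = h_{k,g} + ĥ_{k,g}·diag(θ)·H_ts`. -/
def zeff (h : (g : Fin G) → Fin (Kc g) → Fin N → ℂ)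
    (hhat : (g : Fin G) → Fin (Kc g) → Fin M → ℂ) (H : Fin M → Fin N → ℂ)
    (θ : Fin M → ℂ) (g : Fin G) (k : Fin (Kc g)) : Fin N → ℂ :=
  fun n => h g k n + ∑ m, hhat g k m * θ m * H m n

/-- Achievable rate
`R_{k,g}(θ) = ln(1 + |z_{k,g}(θ)f_g|²/(1 + ∑_{ℓ≠g}|z_{k,g}(θ)f_ℓ|²))`. -/
def rate (h : (g : Fin G) → Fin (Kc g) → Fin N → ℂ)
    (hhat : (g : Fin G) → Fin (Kc g) → Fin M → ℂ) (H : Fin M → Fin N → ℂ)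
    (f : Fin G → Fin N → ℂ) (θ : Fin M → ℂ) (g : Fin G) (k : Fin (Kc g)) : ℝ :=
  Real.log (1 + Complex.normSq (cdot (zeff h hhat H θ g k) (f g)) /
    (1 + ∑ ℓ ∈ Finset.univ.erase g, Complex.normSq (cdot (zeff h hhat H θ g k) (f ℓ))))

/-- Smoothed sum rate `R̃_sum(θ) = -(1/τ)·∑_g ln(∑_k exp(-τ·R_{k,g}(θ)))`. -/
def smoothedSumRate (τ : ℝ) (h : (g : Fin G) → Fin (Kc g) → Fin N → ℂ)
    (hhat : (g : Fin G) → Fin (Kc g) → Fin M → ℂ) (H : Fin M → Fin N → ℂ)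
    (f : Fin G → Fin N → ℂ) (θ : Fin M → ℂ) : ℝ :=
  -(1 / τ) * ∑ g, Real.log (∑ k, Real.exp (-τ * rate h hhat H f θ g k))

/-- `v_{k,g,j} = vecd{ĥ_{k,g}ᴴ z_{k,g}(θ) f_j f_jᴴ H_tsᴴ}`, i.e.
`(v_{k,g,j})ₘ = conj((ĥ_{k,g})ₘ)·(z_{k,g}(θ)f_j)·conj((H_ts f_j)ₘ)`. -/
def vvec (h : (g : Fin G) → Fin (Kc g) → Fin N → ℂ)
    (hhat : (g : Fin G) → Fin (Kc g) → Fin M → ℂ) (H : Fin M → Fin N → ℂ)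
    (f : Fin G → Fin N → ℂ) (θ : Fin M → ℂ) (g : Fin G) (k : Fin (Kc g))
    (j : Fin G) : Fin M → ℂ :=
  fun m => (starRingEnd ℂ) (hhat g k m) * cdot (zeff h hhat H θ g k) (f j) *
    (starRingEnd ℂ) (∑ n, H m n * f j n)

/-- **Theorem 2: closed-form gradient of the smoothed sum rate w.r.t. the IRS
phase shifts (eqns. (B1)–(B3)).** For every `θ`, the smoothed sum rate is
real-differentiable at `θ` with the stated conjugate Wirtinger gradient. -/
theorem smoothedSumRate_wirtinger_grad_wrt_theta
    (τ : ℝ) (hτ : 0 < τ) (h : (g : Fin G) → Fin (Kc g) → Fin N → ℂ)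
    (hhat : (g : Fin G) → Fin (Kc g) → Fin M → ℂ) (H : Fin M → Fin N → ℂ)
    (f : Fin G → Fin N → ℂ) :
    ∀ θ : Fin M → ℂ,
      HasWirtingerGradAt
        (fun θ' => smoothedSumRate τ h hhat H f θ')
        (fun m => ∑ g,
          (∑ k, ((Real.exp (-τ * rate h hhat H f θ g k) : ℝ) : ℂ) *
              ((∑ j, vvec h hhat H f θ g k j m) /
                (((1 + ∑ j, Complex.normSq (cdot (zeff h hhat H θ g k) (f j)) : ℝ)) : ℂ)
                - (∑ ℓ ∈ Finset.univ.erase g, vvec h hhat H f θ g k ℓ m) /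
                  (((1 + ∑ ℓ ∈ Finset.univ.erase g,
                      Complex.normSq (cdot (zeff h hhat H θ g k) (f ℓ)) : ℝ)) : ℂ))) /
            (((∑ k, Real.exp (-τ * rate h hhat H f θ g k) : ℝ)) : ℂ))
        θ := by
  intro θ
  have hτne : τ ≠ 0 := ne_of_gt hτ
  -- affine form of the effective channel inner product
  have hZ : ∀ (g : Fin G) (k : Fin (Kc g)) (j : Fin G) (θ' : Fin M → ℂ),
      cdot (zeff h hhat H θ' g k) (f j)
        = cdot (h g k) (f j) + ∑ m, (hhat g k m * ∑ n, H m n * f j n) * θ' m := by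
    intro g k j θ'
    simp only [cdot, zeff, add_mul, Finset.sum_add_distrib, Finset.sum_mul, Finset.mul_sum]
    congr 1
    rw [Finset.sum_comm]
    exact Finset.sum_congr rfl fun m _ => Finset.sum_congr rfl fun n _ => by ring
  -- gradient of each quadratic term
  have hq : ∀ (g : Fin G) (k : Fin (Kc g)) (j : Fin G), HasWirtingerGradAt
      (fun θ' => Complex.normSq (cdot (zeff h hhat H θ' g k) (f j)))
      (vvec h hhat H f θ g k j) θ := by
    intro g k j
    refine (wgrad_normSq_affine (cdot (h g k) (f j))
        (fun m => hhat g k m * ∑ n, H m n * f j n) θ).congr_all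
      (fun y => ?_) (fun m => ?_)
    · rw [hZ g k j y]
    · rw [← hZ g k j θ]
      simp only [vvec, map_mul]
      ring
  -- per-group gradients
  have hgterm : ∀ g : Fin G, HasWirtingerGradAt
      (fun θ' => -(1 / τ) * Real.log (∑ k, Real.exp (-τ * rate h hhat H f θ' g k)))
      (fun m =>
        (∑ k, ((Real.exp (-τ * rate h hhat H f θ g k) : ℝ) : ℂ) *
              ((∑ j, vvec h hhat H f θ g k j m) /
                (((1 + ∑ j, Complex.normSq (cdot (zeff h hhat H θ g k) (f j)) : ℝ)) : ℂ)
                - (∑ ℓ ∈ Finset.univ.erase g, vvec h hhat H f θ g k ℓ m) /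
                  (((1 + ∑ ℓ ∈ Finset.univ.erase g,
                      Complex.normSq (cdot (zeff h hhat H θ g k) (f ℓ)) : ℝ)) : ℂ))) /
            (((∑ k, Real.exp (-τ * rate h hhat H f θ g k) : ℝ)) : ℂ)) θ := by
    intro g
    rcases Nat.eq_zero_or_pos (Kc g) with hKg | hKg
    · -- empty group: everything is constant / zero
      have hE : IsEmpty (Fin (Kc g)) := by rw [hKg]; infer_instance
      refine (HasWirtingerGradAt.const (-(1 / τ) * Real.log 0)).congr_all
        (fun y => ?_) (fun m => ?_)
      · rw [Finset.univ_eq_empty (α := Fin (Kc g)), Finset.sum_empty]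
      · rw [Finset.univ_eq_empty (α := Fin (Kc g)), Finset.sum_empty,
          Finset.sum_empty]
        simp
    · have hne : Nonempty (Fin (Kc g)) := ⟨⟨0, hKg⟩⟩
      -- positivity of the denominators
      have hSpos : ∀ k : Fin (Kc g),
          (0:ℝ) < 1 + ∑ j, Complex.normSq (cdot (zeff h hhat H θ g k) (f j)) := by
        intro k
        have := Finset.sum_nonneg
          (fun (j : Fin G) (_ : j ∈ Finset.univ) =>
            Complex.normSq_nonneg (cdot (zeff h hhat H θ g k) (f j)))
        linarith
      have hBpos : ∀ k : Fin (Kc g), (0:ℝ) < 1 + ∑ ℓ ∈ Finset.univ.erase g,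
          Complex.normSq (cdot (zeff h hhat H θ g k) (f ℓ)) := by
        intro k
        have := Finset.sum_nonneg
          (fun (ℓ : Fin G) (_ : ℓ ∈ Finset.univ.erase g) =>
            Complex.normSq_nonneg (cdot (zeff h hhat H θ g k) (f ℓ)))
        linarith
      -- gradient of the rate
      have hrategrad : ∀ k : Fin (Kc g), HasWirtingerGradAt
          (fun θ' => rate h hhat H f θ' g k)
          (fun m =>
            (((1 + ∑ j, Complex.normSq (cdot (zeff h hhat H θ g k) (f j)))⁻¹ : ℝ) : ℂ)
              * (∑ j, vvec h hhat H f θ g k j m)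
            - (((1 + ∑ ℓ ∈ Finset.univ.erase g,
                Complex.normSq (cdot (zeff h hhat H θ g k) (f ℓ)))⁻¹ : ℝ) : ℂ)
              * (∑ ℓ ∈ Finset.univ.erase g, vvec h hhat H f θ g k ℓ m)) θ := by
        intro k
        have hSg : HasWirtingerGradAt
            (fun θ' => 1 + ∑ j, Complex.normSq (cdot (zeff h hhat H θ' g k) (f j)))
            (fun m => ∑ j, vvec h hhat H f θ g k j m) θ :=
          HasWirtingerGradAt.add_const 1
            (HasWirtingerGradAt.hsum Finset.univ (fun j _ => hq g k j))
        have hBg : HasWirtingerGradAt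
            (fun θ' => 1 + ∑ ℓ ∈ Finset.univ.erase g,
              Complex.normSq (cdot (zeff h hhat H θ' g k) (f ℓ)))
            (fun m => ∑ ℓ ∈ Finset.univ.erase g, vvec h hhat H f θ g k ℓ m) θ :=
          HasWirtingerGradAt.add_const 1
            (HasWirtingerGradAt.hsum (Finset.univ.erase g) (fun ℓ _ => hq g k ℓ))
        have hlogS := HasWirtingerGradAt.comp_real
          (Real.hasDerivAt_log (ne_of_gt (hSpos k))) hSg
        have hlogB := HasWirtingerGradAt.comp_real
          (Real.hasDerivAt_log (ne_of_gt (hBpos k))) hBg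
        refine (hlogS.sub hlogB).congr_all (fun y => ?_) (fun m => rfl)
        -- rate = log(1+S) - log(1+B)
        have hBy : (0:ℝ) < 1 + ∑ ℓ ∈ Finset.univ.erase g,
            Complex.normSq (cdot (zeff h hhat H y g k) (f ℓ)) := by
          have := Finset.sum_nonneg
            (fun (ℓ : Fin G) (_ : ℓ ∈ Finset.univ.erase g) =>
              Complex.normSq_nonneg (cdot (zeff h hhat H y g k) (f ℓ)))
          linarith
        have hAy : (0:ℝ) ≤ Complex.normSq (cdot (zeff h hhat H y g k) (f g)) :=
          Complex.normSq_nonneg _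
        have hSy : (0:ℝ) < 1 + (Complex.normSq (cdot (zeff h hhat H y g k) (f g)) +
            ∑ ℓ ∈ Finset.univ.erase g,
              Complex.normSq (cdot (zeff h hhat H y g k) (f ℓ))) := by linarith
        unfold rate
        rw [← Finset.add_sum_erase Finset.univ
          (fun j => Complex.normSq (cdot (zeff h hhat H y g k) (f j))) (Finset.mem_univ g)]
        rw [← Real.log_div (ne_of_gt hSy) (ne_of_gt hBy)]
        congr 1
        set A := Complex.normSq (cdot (zeff h hhat H y g k) (f g)) with hAdef
        set B := ∑ ℓ ∈ Finset.univ.erase g,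
          Complex.normSq (cdot (zeff h hhat H y g k) (f ℓ)) with hBdef
        rw [show (1:ℝ) + (A + B) = (1 + B) + A by ring, add_div,
          div_self (ne_of_gt hBy)]
      -- gradient of each exponential term
      have hexp : ∀ k : Fin (Kc g), HasWirtingerGradAt
          (fun θ' => Real.exp (-τ * rate h hhat H f θ' g k))
          (fun m => ((Real.exp (-τ * rate h hhat H f θ g k) : ℝ) : ℂ) *
            (((-τ : ℝ) : ℂ) *
              ((((1 + ∑ j, Complex.normSq (cdot (zeff h hhat H θ g k) (f j)))⁻¹ : ℝ) : ℂ)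
                * (∑ j, vvec h hhat H f θ g k j m)
              - (((1 + ∑ ℓ ∈ Finset.univ.erase g,
                  Complex.normSq (cdot (zeff h hhat H θ g k) (f ℓ)))⁻¹ : ℝ) : ℂ)
                * (∑ ℓ ∈ Finset.univ.erase g, vvec h hhat H f θ g k ℓ m)))) θ := by
        intro k
        exact HasWirtingerGradAt.comp_real
          (Real.hasDerivAt_exp (-τ * rate h hhat H f θ g k))
          ((hrategrad k).const_mul (-τ))
      -- sum over users
      have hE := HasWirtingerGradAt.hsum Finset.univ (fun k _ => hexp k)
      have hEpos : (0:ℝ) < ∑ k, Real.exp (-τ * rate h hhat H f θ g k) :=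
        Finset.sum_pos (fun k _ => Real.exp_pos _) Finset.univ_nonempty
      have hlogE := HasWirtingerGradAt.comp_real
        (Real.hasDerivAt_log (ne_of_gt hEpos)) hE
      refine (hlogE.const_mul (-(1 / τ))).congr_all (fun y => rfl) (fun m => ?_)
      -- algebraic identification of the gradient
      have hEne : ((∑ k, Real.exp (-τ * rate h hhat H f θ g k) : ℝ) : ℂ) ≠ 0 :=
        Complex.ofReal_ne_zero.mpr (ne_of_gt hEpos)
      have hSne : ∀ k : Fin (Kc g),
          ((1 + ∑ j, Complex.normSq (cdot (zeff h hhat H θ g k) (f j)) : ℝ) : ℂ) ≠ 0 :=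
        fun k => Complex.ofReal_ne_zero.mpr (ne_of_gt (hSpos k))
      have hBne : ∀ k : Fin (Kc g), ((1 + ∑ ℓ ∈ Finset.univ.erase g,
          Complex.normSq (cdot (zeff h hhat H θ g k) (f ℓ)) : ℝ) : ℂ) ≠ 0 :=
        fun k => Complex.ofReal_ne_zero.mpr (ne_of_gt (hBpos k))
      have hτcne : (τ : ℂ) ≠ 0 := Complex.ofReal_ne_zero.mpr hτne
      push_cast at hEne hSne hBne ⊢
      rw [Finset.sum_div, Finset.mul_sum, Finset.mul_sum]
      refine Finset.sum_congr rfl (fun k _ => ?_)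
      exact alg_aux _ _ _ _ _ _ _ hτcne (hSne k) (hBne k) hEne
  -- assemble over groups
  refine (HasWirtingerGradAt.hsum Finset.univ (fun g _ => hgterm g)).congr_all
    (fun y => ?_) (fun m => rfl)
  simp [smoothedSumRate, Finset.mul_sum]
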